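/- arXiv:1803.10516 — 5 statements merged into one kernel-verified Lean document; each statement's English description precedes it below -/
import Mathlib

section
/- If A is a bounded linear operator on a nonzero complex Hilbert space, then the maximal numerical range W₀(A) is nonempty. -/
open Filter Topology

/-- The numerical range `W(A) = {⟨Ax, x⟩ : ‖x‖ = 1}`. -/
def numRange {H : Type*} [NormedAddCommGroup H] [InnerProductSpace ℂ H]
    (A : H →L[ℂ] H) : Set ℂ :=
  {z | ∃ x : H, ‖x‖ = 1 ∧ (inner ℂ (A x) x : ℂ) = z}

/-- The maximal numerical range of a bounded linear operator `A` on a complex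
Hilbert space: the set of `λ ∈ ℂ` for which there is a sequence of unit vectors
`xₙ` with `‖A xₙ‖ → ‖A‖` and `⟨A xₙ, xₙ⟩ → λ`. -/
def maxNumRange {H : Type*} [NormedAddCommGroup H] [InnerProductSpace ℂ H]
    (A : H →L[ℂ] H) : Set ℂ :=
  {lam | ∃ x : ℕ → H, (∀ n, ‖x n‖ = 1) ∧
    Tendsto (fun n => ‖A (x n)‖) atTop (𝓝 ‖A‖) ∧
    Tendsto (fun n => (inner ℂ (A (x n)) (x n) : ℂ)) atTop (𝓝 lam)}

lemma exists_unit_aux {H : Type*} [NormedAddCommGroup H]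
    [InnerProductSpace ℂ H] [Nontrivial H] (A : H →L[ℂ] H) (n : ℕ) :
    ∃ x : H, ‖x‖ = 1 ∧ ‖A‖ - 1/(n+1) ≤ ‖A x‖ := by
  by_contra h
  push_neg at h
  obtain ⟨y, hy⟩ := exists_ne (0 : H)
  have hy1 : ‖(‖y‖⁻¹ : ℂ) • y‖ = 1 := by
    rw [norm_smul]
    simp [norm_ne_zero_iff.2 hy]
  by_cases hc : 0 ≤ ‖A‖ - 1/(n+1)
  · have : ‖A‖ ≤ ‖A‖ - 1/(n+1) := by
      apply A.opNorm_le_bound' hc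
      intro x hx
      have h1 : ‖(‖x‖⁻¹ : ℂ) • x‖ = 1 := by
        rw [norm_smul]; simp [hx]
      have := (h _ h1).le
      rw [map_smul, norm_smul] at this
      simp only [norm_inv, Complex.norm_real, norm_norm] at this
      calc ‖A x‖ = ‖x‖ * (‖x‖⁻¹ * ‖A x‖) := by field_simp
        _ ≤ ‖x‖ * (‖A‖ - 1/(n+1)) := by
            apply mul_le_mul_of_nonneg_left _ (norm_nonneg x)
            simpa using this
        _ = (‖A‖ - 1/(n+1)) * ‖x‖ := mul_comm _ _
    have hp : (0:ℝ) < 1/(n+1) := by positivity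
    linarith
  · push_neg at hc
    have := h _ hy1
    have := norm_nonneg (A ((‖y‖⁻¹ : ℂ) • y))
    linarith

theorem maxNumRange_nonempty {H : Type*} [NormedAddCommGroup H]
    [InnerProductSpace ℂ H] [CompleteSpace H] [Nontrivial H] (A : H →L[ℂ] H) :
    (maxNumRange A).Nonempty := by
  choose x hx1 hx2 using fun n => exists_unit_aux A n
  have hnorm : Tendsto (fun n => ‖A (x n)‖) atTop (𝓝 ‖A‖) := by
    have h1 : Tendsto (fun n : ℕ => ‖A‖ - 1/(n+1)) atTop (𝓝 ‖A‖) := by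
      have := tendsto_one_div_add_atTop_nhds_zero_nat (𝕜 := ℝ)
      simpa using (tendsto_const_nhds (x := ‖A‖)).sub this
    refine tendsto_of_tendsto_of_tendsto_of_le_of_le h1 tendsto_const_nhds hx2 ?_
    intro n
    calc ‖A (x n)‖ ≤ ‖A‖ * ‖x n‖ := A.le_opNorm _
      _ = ‖A‖ := by rw [hx1]; ring
  have hb : ∀ n, (inner ℂ (A (x n)) (x n) : ℂ) ∈ Metric.closedBall (0:ℂ) ‖A‖ := by
    intro n
    rw [Metric.mem_closedBall, dist_zero_right]
    calc ‖(inner ℂ (A (x n)) (x n) : ℂ)‖ ≤ ‖A (x n)‖ * ‖x n‖ := norm_inner_le_norm _ _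
      _ ≤ ‖A‖ * ‖x n‖ * ‖x n‖ := by
          exact mul_le_mul_of_nonneg_right (A.le_opNorm _) (norm_nonneg _)
      _ = ‖A‖ := by rw [hx1]; ring
  obtain ⟨lam, -, φ, hφ, hlim⟩ :=
    (isCompact_closedBall (0:ℂ) ‖A‖).tendsto_subseq hb
  refine ⟨lam, fun n => x (φ n), fun n => hx1 _, ?_, hlim⟩
  exact hnorm.comp hφ.tendsto_atTop
end

section
/- If λ lies in the closure of the numerical range W(A) and |λ| = ‖A‖, then λ belongs to the maximal numerical range W₀(A). Consequently, W₀(A) ∩ {z : |z| = ‖A‖} = cl W(A) ∩ {z : |z| = ‖A‖}. -/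
/-!
For a unit vector `x` we have `|⟨Ax, x⟩| ≤ ‖Ax‖ ≤ ‖A‖`. If unit vectors `xₙ` have
`⟨Axₙ, xₙ⟩ → λ` with `|λ| = ‖A‖`, the left end of this chain tends to `‖A‖`, so the
squeeze forces `‖Axₙ‖ → ‖A‖`, i.e. `λ ∈ W₀(A)`. Conversely every point of `W₀(A)` is a
limit of points of `W(A)`.
-/

open Filter Topology

lemma norm_inner_le_norm_of_norm_eq_one {𝕜 E : Type*} [RCLike 𝕜] [SeminormedAddCommGroup E]
    [InnerProductSpace 𝕜 E] (y : E) {x : E} (hx : ‖x‖ = 1) : ‖(inner 𝕜 y x : 𝕜)‖ ≤ ‖y‖ := by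
  simpa [hx] using norm_inner_le_norm (𝕜 := 𝕜) y x

section

variable {H : Type*} [NormedAddCommGroup H] [InnerProductSpace ℂ H]

lemma maxNumRange_subset_closure_numRange (A : H →L[ℂ] H) :
    maxNumRange A ⊆ closure (numRange A) := by
  rintro lam ⟨x, hx, -, hlim⟩
  exact mem_closure_of_tendsto hlim (Eventually.of_forall fun n => ⟨x n, hx n, rfl⟩)

lemma mem_maxNumRange_of_mem_closure_numRange {A : H →L[ℂ] H} {lam : ℂ}
    (hlam : lam ∈ closure (numRange A)) (hnorm : ‖lam‖ = ‖A‖) :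
    lam ∈ maxNumRange A := by
  obtain ⟨z, hz, hlim⟩ := mem_closure_iff_seq_limit.mp hlam
  choose x hx hxz using hz
  refine ⟨x, hx, ?_, by simpa only [hxz] using hlim⟩
  have hnorm_lim : Tendsto (fun n => ‖z n‖) atTop (𝓝 ‖A‖) := hnorm ▸ hlim.norm
  refine tendsto_of_tendsto_of_tendsto_of_le_of_le hnorm_lim tendsto_const_nhds
    (fun n => ?_) (fun n => A.unit_le_opNorm _ (hx n).le)
  exact hxz n ▸ norm_inner_le_norm_of_norm_eq_one (A (x n)) (hx n)

end

theorem maxNumRange_inter_circle {H : Type*} [NormedAddCommGroup H]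
    [InnerProductSpace ℂ H] (A : H →L[ℂ] H) :
    (∀ lam : ℂ, lam ∈ closure (numRange A) → ‖lam‖ = ‖A‖ →
      lam ∈ maxNumRange A) ∧
    maxNumRange A ∩ {z : ℂ | ‖z‖ = ‖A‖} =
      closure (numRange A) ∩ {z : ℂ | ‖z‖ = ‖A‖} := by
  refine ⟨fun _ => mem_maxNumRange_of_mem_closure_numRange, ?_⟩
  refine (Set.inter_subset_inter_left _ (maxNumRange_subset_closure_numRange A)).antisymm ?_
  rintro lam ⟨hlam, hnorm⟩
  exact ⟨mem_maxNumRange_of_mem_closure_numRange hlam hnorm, hnorm⟩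
end

section
/- If N is a normal extension of A realized as a block upper-triangular operator N = [[A,B],[0,C]] on H ⊕ G with ‖N‖ = ‖A‖, then W₀(A) ⊆ W₀(N). -/
open Filter Topology

theorem maxNumRange_subset_of_normal_extension {H G : Type*}
    [NormedAddCommGroup H] [InnerProductSpace ℂ H] [CompleteSpace H]
    [NormedAddCommGroup G] [InnerProductSpace ℂ G] [CompleteSpace G]
    (A : H →L[ℂ] H) (B : G →L[ℂ] H) (C : G →L[ℂ] G)
    (N : WithLp 2 (H × G) →L[ℂ] WithLp 2 (H × G))
    (hblock : ∀ (x : H) (y : G), N ((WithLp.equiv 2 (H × G)).symm (x, y)) =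
      (WithLp.equiv 2 (H × G)).symm (A x + B y, C y))
    (hnormal : IsStarNormal N) (hnorm : ‖N‖ = ‖A‖) :
    maxNumRange A ⊆ maxNumRange N := by
  rintro lam ⟨x, hx1, hx2, hx3⟩
  refine ⟨fun n => (WithLp.equiv 2 (H × G)).symm (x n, 0), ?_, ?_, ?_⟩
  · intro n
    rw [WithLp.prod_norm_eq_of_L2]
    simp [hx1 n]
  · have hN : ∀ n, ‖N ((WithLp.equiv 2 (H × G)).symm (x n, 0))‖ = ‖A (x n)‖ := by
      intro n
      rw [hblock, WithLp.prod_norm_eq_of_L2]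
      simp
    simp only [hN, hnorm]
    exact hx2
  · have h : ∀ n, (inner ℂ (N ((WithLp.equiv 2 (H × G)).symm (x n, 0)))
        ((WithLp.equiv 2 (H × G)).symm (x n, 0)) : ℂ) = inner ℂ (A (x n)) (x n) := by
      intro n
      rw [hblock, WithLp.prod_inner_apply]
      simp
    simp only [h]
    exact hx3
end

section
/- For the 3×3 matrix B with rows (0,1,0), (0,0,0), (0,0,1): ‖B‖ = 1, the maximal numerical range W₀(B) is the segment [0,1] ⊂ ℂ, σ(B) ∩ 𝕋 = {1}, and hence W₀(B) strictly contains conv(σ(B) ∩ 𝕋). -/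
open Filter Topology

theorem example_matrix_W0 (B : Matrix (Fin 3) (Fin 3) ℂ)
    (hB : B = !![0, 1, 0; 0, 0, 0; 0, 0, 1]) :
    ‖(Matrix.toEuclideanCLM (𝕜 := ℂ) B)‖ = 1 ∧
    maxNumRange (Matrix.toEuclideanCLM (𝕜 := ℂ) B) = segment ℝ (0 : ℂ) 1 ∧
    spectrum ℂ B ∩ {z : ℂ | ‖z‖ = 1} = {1} ∧
    convexHull ℝ (spectrum ℂ B ∩ {z : ℂ | ‖z‖ = 1}) ⊂
      maxNumRange (Matrix.toEuclideanCLM (𝕜 := ℂ) B) := by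
  subst hB
  set M : Matrix (Fin 3) (Fin 3) ℂ := !![0, 1, 0; 0, 0, 0; 0, 0, 1] with hM
  set T : EuclideanSpace ℂ (Fin 3) →L[ℂ] EuclideanSpace ℂ (Fin 3) :=
    Matrix.toEuclideanCLM (𝕜 := ℂ) M with hT
  -- entrywise description of T
  have hTx0 : ∀ x : EuclideanSpace ℂ (Fin 3), T x 0 = x 1 := by
    intro x
    show M.mulVec x 0 = x 1
    simp [hM, Matrix.mulVec, dotProduct, Fin.sum_univ_three]
  have hTx1 : ∀ x : EuclideanSpace ℂ (Fin 3), T x 1 = 0 := by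
    intro x
    show M.mulVec x 1 = 0
    simp [hM, Matrix.mulVec, dotProduct, Fin.sum_univ_three]
  have hTx2 : ∀ x : EuclideanSpace ℂ (Fin 3), T x 2 = x 2 := by
    intro x
    show M.mulVec x 2 = x 2
    simp [hM, Matrix.mulVec, dotProduct, Fin.sum_univ_three]
  have hnorm : ∀ x : EuclideanSpace ℂ (Fin 3),
      ‖x‖ = Real.sqrt (‖x 0‖ ^ 2 + ‖x 1‖ ^ 2 + ‖x 2‖ ^ 2) := by
    intro x
    rw [EuclideanSpace.norm_eq, Fin.sum_univ_three]
  have hTnorm : ∀ x : EuclideanSpace ℂ (Fin 3),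
      ‖T x‖ = Real.sqrt (‖x 1‖ ^ 2 + ‖x 2‖ ^ 2) := by
    intro x
    rw [hnorm (T x), hTx0, hTx1, hTx2]
    simp
  -- the operator norm
  have hT1 : ‖T‖ = 1 := by
    apply le_antisymm
    · refine T.opNorm_le_bound zero_le_one fun x => ?_
      rw [one_mul, hTnorm x, hnorm x]
      apply Real.sqrt_le_sqrt
      nlinarith [sq_nonneg ‖x 0‖]
    · have he : ‖(EuclideanSpace.single 2 (1 : ℂ) : EuclideanSpace ℂ (Fin 3))‖ = 1 := by
        rw [EuclideanSpace.norm_single]; norm_num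
      have h := T.le_opNorm (EuclideanSpace.single 2 (1 : ℂ))
      have h1e : (EuclideanSpace.single 2 (1 : ℂ) : EuclideanSpace ℂ (Fin 3)) 1 = 0 := by
        rw [EuclideanSpace.single_apply, if_neg (by decide)]
      have h2e : (EuclideanSpace.single 2 (1 : ℂ) : EuclideanSpace ℂ (Fin 3)) 2 = 1 := by
        rw [EuclideanSpace.single_apply, if_pos rfl]
      rw [he, mul_one, hTnorm, h1e, h2e] at h
      simpa using h
  -- the inner product formula
  have hInner : ∀ x : EuclideanSpace ℂ (Fin 3),
      (inner ℂ (T x) x : ℂ) = (starRingEnd ℂ) (x 1) * x 0 + (‖x 2‖ : ℂ) ^ 2 := by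
    intro x
    rw [PiLp.inner_apply, Fin.sum_univ_three, hTx0, hTx1, hTx2,
      RCLike.inner_apply, RCLike.inner_apply, RCLike.inner_apply, RCLike.mul_conj]
    simp only [map_zero, zero_mul, mul_zero, add_zero]
    rw [mul_comm (x 0)]
    norm_cast
  have hsq : ∀ s : ℝ, 0 ≤ s → ‖((Real.sqrt s : ℝ) : ℂ)‖ ^ 2 = s := by
    intro s hs
    rw [Complex.norm_real, Real.norm_eq_abs, abs_of_nonneg (Real.sqrt_nonneg s),
      Real.sq_sqrt hs]
  -- segment ⊆ maxNumRange
  have hseg_sub : segment ℝ (0 : ℂ) 1 ⊆ maxNumRange T := by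
    rintro z ⟨a, b, ha, hb, hab, rfl⟩
    have hb1 : b ≤ 1 := by linarith
    set y : EuclideanSpace ℂ (Fin 3) :=
      (WithLp.equiv 2 (Fin 3 → ℂ)).symm
        ![0, ((Real.sqrt (1 - b) : ℝ) : ℂ), ((Real.sqrt b : ℝ) : ℂ)] with hy
    have hy0 : y 0 = 0 := rfl
    have hy1 : y 1 = ((Real.sqrt (1 - b) : ℝ) : ℂ) := rfl
    have hy2 : y 2 = ((Real.sqrt b : ℝ) : ℂ) := rfl
    have hny : ‖y‖ = 1 := by
      rw [hnorm, hy0, hy1, hy2, hsq _ (by linarith), hsq _ hb]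
      have : ‖(0 : ℂ)‖ ^ 2 + (1 - b) + b = 1 := by simp
      rw [this, Real.sqrt_one]
    have hTny : ‖T y‖ = 1 := by
      rw [hTnorm, hy1, hy2, hsq _ (by linarith), hsq _ hb]
      have : (1 - b) + b = 1 := by ring
      rw [this, Real.sqrt_one]
    have hiy : (inner ℂ (T y) y : ℂ) = (b : ℂ) := by
      rw [hInner, hy0, hy2, mul_zero, zero_add]
      norm_cast
      exact hsq b hb
    have hzb : a • (0 : ℂ) + b • 1 = (b : ℂ) := by
      simp [Complex.real_smul]
    refine ⟨fun _ => y, fun _ => hny, ?_, ?_⟩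
    · rw [hT1]
      simpa [hTny] using (tendsto_const_nhds : Tendsto (fun _ : ℕ => (1 : ℝ)) atTop (𝓝 1))
    · rw [hzb]
      simpa [hiy] using (tendsto_const_nhds : Tendsto (fun _ : ℕ => (b : ℂ)) atTop (𝓝 b))
  -- maxNumRange ⊆ segment
  have hsub2 : maxNumRange T ⊆ segment ℝ (0 : ℂ) 1 := by
    rintro lam ⟨x, hx1, hx2, hx3⟩
    have hsum : ∀ n, ‖x n 0‖ ^ 2 + ‖x n 1‖ ^ 2 + ‖x n 2‖ ^ 2 = 1 := by
      intro n
      have h := hx1 n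
      rw [hnorm] at h
      exact Real.sqrt_eq_one.mp h
    rw [hT1] at hx2
    have hsq2 : Tendsto (fun n => ‖T (x n)‖ ^ 2) atTop (𝓝 1) := by
      simpa using hx2.pow 2
    have h12 : Tendsto (fun n => ‖x n 1‖ ^ 2 + ‖x n 2‖ ^ 2) atTop (𝓝 1) := by
      refine hsq2.congr fun n => ?_
      rw [hTnorm]
      exact Real.sq_sqrt (by positivity)
    have h0sq : Tendsto (fun n => ‖x n 0‖ ^ 2) atTop (𝓝 0) := by
      have h := (tendsto_const_nhds : Tendsto (fun _ : ℕ => (1 : ℝ)) atTop (𝓝 1)).sub h12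
      rw [sub_self] at h
      refine h.congr fun n => ?_
      have := hsum n
      linarith
    have h0n : Tendsto (fun n => ‖x n 0‖) atTop (𝓝 0) := by
      have h := (Real.continuous_sqrt.tendsto 0).comp h0sq
      rw [Real.sqrt_zero] at h
      refine h.congr fun n => ?_
      exact Real.sqrt_sq (norm_nonneg _)
    have hterm : Tendsto (fun n => (starRingEnd ℂ) (x n 1) * (x n 0)) atTop (𝓝 0) := by
      refine squeeze_zero_norm (fun n => ?_) h0n
      rw [norm_mul, RCLike.norm_conj]
      have h1le : ‖x n 1‖ ≤ 1 := by
        nlinarith [hsum n, sq_nonneg ‖x n 0‖, sq_nonneg ‖x n 2‖, norm_nonneg (x n 1)]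
      calc ‖x n 1‖ * ‖x n 0‖ ≤ 1 * ‖x n 0‖ :=
            mul_le_mul_of_nonneg_right h1le (norm_nonneg _)
        _ = ‖x n 0‖ := one_mul _
    have hreal : Tendsto (fun n => ((‖x n 2‖ ^ 2 : ℝ) : ℂ)) atTop (𝓝 lam) := by
      have h := hx3.sub hterm
      rw [sub_zero] at h
      refine h.congr fun n => ?_
      rw [hInner]
      push_cast
      ring
    have hre : Tendsto (fun n => (‖x n 2‖ ^ 2 : ℝ)) atTop (𝓝 lam.re) := by
      have h := (Complex.continuous_re.tendsto lam).comp hreal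
      exact h.congr fun n => Complex.ofReal_re _
    have him : lam.im = 0 := by
      have h := (Complex.continuous_im.tendsto lam).comp hreal
      have h0 : Tendsto (fun _ : ℕ => (0 : ℝ)) atTop (𝓝 lam.im) :=
        h.congr fun n => Complex.ofReal_im _
      exact (tendsto_nhds_unique tendsto_const_nhds h0).symm
    have hre0 : 0 ≤ lam.re :=
      ge_of_tendsto hre (Eventually.of_forall fun n => sq_nonneg _)
    have hre1 : lam.re ≤ 1 :=
      le_of_tendsto hre (Eventually.of_forall fun n => by
        nlinarith [hsum n, sq_nonneg ‖x n 0‖, sq_nonneg ‖x n 1‖])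
    have hlam : lam = (lam.re : ℂ) := by
      apply Complex.ext <;> simp [him]
    exact ⟨1 - lam.re, lam.re, by linarith, hre0, by ring,
      by rw [smul_zero, zero_add, Complex.real_smul, mul_one, ← hlam]⟩
  have hmax : maxNumRange T = segment ℝ (0 : ℂ) 1 := Set.Subset.antisymm hsub2 hseg_sub
  -- spectrum
  have hdet : ∀ z : ℂ, (algebraMap ℂ (Matrix (Fin 3) (Fin 3) ℂ) z - M).det = z * z * (z - 1) := by
    intro z
    rw [Matrix.det_fin_three]
    norm_num [hM, Matrix.algebraMap_matrix_apply, Fin.ext_iff, Matrix.cons_val_two, Matrix.vecHead, Matrix.vecTail]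
    try ring
  have hspec : spectrum ℂ M ∩ {z : ℂ | ‖z‖ = 1} = {1} := by
    ext z
    simp only [Set.mem_inter_iff, Set.mem_setOf_eq, Set.mem_singleton_iff]
    constructor
    · rintro ⟨hz, habs⟩
      rw [spectrum.mem_iff, Matrix.isUnit_iff_isUnit_det, isUnit_iff_ne_zero, not_not,
        hdet] at hz
      have hz01 : z = 0 ∨ z = 1 := by
        rcases mul_eq_zero.mp hz with h | h
        · rcases mul_eq_zero.mp h with h | h
          · exact Or.inl h
          · exact Or.inl h
        · exact Or.inr (sub_eq_zero.mp h)
      rcases hz01 with rfl | rfl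
      · simp at habs
      · rfl
    · rintro rfl
      refine ⟨?_, by simp⟩
      rw [spectrum.mem_iff, Matrix.isUnit_iff_isUnit_det, isUnit_iff_ne_zero, not_not, hdet]
      ring
  refine ⟨hT1, hmax, hspec, ?_⟩
  rw [hspec, convexHull_singleton, hmax, Set.ssubset_def]
  constructor
  · exact Set.singleton_subset_iff.mpr (right_mem_segment ℝ 0 1)
  · intro hcon
    have h := hcon (left_mem_segment ℝ (0 : ℂ) 1)
    simp at h
end

section
/- In finite dimensions, W₀(A) = W(B), where B is the compression of A onto the eigenspace of A*A corresponding to its largest eigenvalue. -/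
set_option synthInstance.maxHeartbeats 1000000
open Filter Topology


/-- If `‖x‖ = 1` and `‖A x‖ = ‖A‖`, then `x` is an eigenvector of `A*A`
with eigenvalue `‖A‖²`. -/
lemma adjoint_comp_eigen_of_norm_eq {H : Type*} [NormedAddCommGroup H]
    [InnerProductSpace ℂ H] [FiniteDimensional ℂ H] (A : H →L[ℂ] H) (x : H)
    (hx : ‖x‖ = 1) (hAx : ‖A x‖ = ‖A‖) :
    (ContinuousLinearMap.adjoint A) (A x) = ((‖A‖ ^ 2 : ℝ) : ℂ) • x := by
  set u := (ContinuousLinearMap.adjoint A) (A x) with hu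
  have h1 : (inner ℂ x u : ℂ) = ((‖A‖ ^ 2 : ℝ) : ℂ) := by
    rw [hu, ContinuousLinearMap.adjoint_inner_right, inner_self_eq_norm_sq_to_K, hAx]
    norm_cast
  have hule : ‖u‖ ≤ ‖A‖ ^ 2 := by
    calc ‖u‖ ≤ ‖ContinuousLinearMap.adjoint A‖ * ‖A x‖ := (ContinuousLinearMap.adjoint A).le_opNorm _
    _ = ‖A‖ ^ 2 := by rw [LinearIsometryEquiv.norm_map ContinuousLinearMap.adjoint A, hAx]; ring
  have huge : ‖A‖ ^ 2 ≤ ‖u‖ := by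
    have := norm_inner_le_norm (𝕜 := ℂ) x u
    rw [h1, hx, one_mul] at this
    simpa using this
  have hun : ‖u‖ = ‖A‖ ^ 2 := le_antisymm hule huge
  have h2 : (inner ℂ x u : ℂ) = ((‖x‖ : ℂ) * ‖u‖) := by
    rw [h1, hx, hun]; norm_num
  have h3 := inner_eq_norm_mul_iff.mp h2
  rw [hx, hun] at h3
  simpa using h3.symm

theorem maxNumRange_eq_numRange_compression {H : Type*} [NormedAddCommGroup H]
    [InnerProductSpace ℂ H] [FiniteDimensional ℂ H] (A : H →L[ℂ] H)
    (E : Submodule ℂ H)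
    (hE : E = Module.End.eigenspace
      (((ContinuousLinearMap.adjoint A).comp A).toLinearMap : Module.End ℂ H)
      ((‖A‖ ^ 2 : ℝ) : ℂ))
    (B : E →L[ℂ] E)
    (hB : ∀ x : E, B x = E.orthogonalProjectionOnto (A x)) :
    maxNumRange A = numRange B := by
  have hmem : ∀ y : H, y ∈ E ↔
      (ContinuousLinearMap.adjoint A) (A y) = ((‖A‖ ^ 2 : ℝ) : ℂ) • y := by
    intro y
    rw [hE, Module.End.mem_eigenspace_iff]
    rfl
  -- for unit vectors in E, ‖A y‖ = ‖A‖
  have hnorm : ∀ y : H, y ∈ E → ‖y‖ = 1 → ‖A y‖ = ‖A‖ := by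
    intro y hy hy1
    have h1 : (inner ℂ y ((ContinuousLinearMap.adjoint A) (A y)) : ℂ) = ((‖A y‖ : ℂ)) ^ 2 := by
      rw [ContinuousLinearMap.adjoint_inner_right, inner_self_eq_norm_sq_to_K]
      norm_cast
    rw [(hmem y).mp hy, inner_smul_right, inner_self_eq_norm_sq_to_K, hy1] at h1
    have h2 : ((‖A‖ : ℂ)) ^ 2 = ((‖A y‖ : ℂ)) ^ 2 := by
      rw [← h1]; push_cast; ring
    have h3 : (‖A‖ : ℝ) ^ 2 = ‖A y‖ ^ 2 := by exact_mod_cast h2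
    nlinarith [norm_nonneg (A y), norm_nonneg A]
  -- inner product with the compression
  have hinner : ∀ y : E, (inner ℂ (B y) y : ℂ) = (inner ℂ (A (y : H)) (y : H) : ℂ) := by
    intro y
    rw [hB y, Submodule.inner_orthogonalProjectionOnto_eq_of_mem_right]
  ext lam
  constructor
  · rintro ⟨x, hx1, hxA, hxi⟩
    haveI : ProperSpace H := FiniteDimensional.proper ℂ H
    have hsph : ∀ n, x n ∈ Metric.sphere (0 : H) 1 := by
      intro n; simpa [mem_sphere_zero_iff_norm] using hx1 n
    obtain ⟨x₀, hx₀s, φ, hφ, hconv⟩ :=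
      (isCompact_sphere (0 : H) 1).tendsto_subseq hsph
    have hx₀1 : ‖x₀‖ = 1 := mem_sphere_zero_iff_norm.mp hx₀s
    have hA0 : ‖A x₀‖ = ‖A‖ := by
      have t1 : Tendsto (fun n => ‖A (x (φ n))‖) atTop (𝓝 ‖A x₀‖) :=
        ((A.continuous.norm).continuousAt.tendsto.comp hconv)
      have t2 : Tendsto (fun n => ‖A (x (φ n))‖) atTop (𝓝 ‖A‖) :=
        hxA.comp hφ.tendsto_atTop
      exact tendsto_nhds_unique t1 t2
    have hlam : (inner ℂ (A x₀) x₀ : ℂ) = lam := by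
      have c : Continuous fun y : H => (inner ℂ (A y) y : ℂ) :=
        Continuous.inner A.continuous continuous_id
      have t1 : Tendsto (fun n => (inner ℂ (A (x (φ n))) (x (φ n)) : ℂ)) atTop
          (𝓝 (inner ℂ (A x₀) x₀)) := (c.continuousAt.tendsto.comp hconv)
      have t2 : Tendsto (fun n => (inner ℂ (A (x (φ n))) (x (φ n)) : ℂ)) atTop (𝓝 lam) :=
        hxi.comp hφ.tendsto_atTop
      exact tendsto_nhds_unique t1 t2
    have hx₀E : x₀ ∈ E :=
      (hmem x₀).mpr (adjoint_comp_eigen_of_norm_eq A x₀ hx₀1 hA0)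
    refine ⟨⟨x₀, hx₀E⟩, ?_, ?_⟩
    · simpa using hx₀1
    · rw [hinner ⟨x₀, hx₀E⟩]; exact hlam
  · rintro ⟨y, hy1, hyi⟩
    refine ⟨fun _ => (y : H), fun n => ?_, ?_, ?_⟩
    · simpa using hy1
    · have : ‖A (y : H)‖ = ‖A‖ := hnorm y y.2 (by simpa using hy1)
      simp [this]
    · have : (inner ℂ (A (y : H)) (y : H) : ℂ) = lam := by rw [← hinner y, hyi]
      simp [this]
end
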